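/- arXiv:2207.11629 — 7 statements merged into one kernel-verified Lean document; each statement's English description precedes it below -/
import Mathlib

section
/- If P is a cancellative ordered semiring, then the heavier-higher relation ⊑ on finitely supported functions from a poset X to P is antisymmetric, hence a partial order. -/
open Finsupp

variable {X P : Type*}

/-- A subset of a poset is upwards closed. -/
def UpClosed [Preorder X] (U : Set X) : Prop :=
  ∀ ⦃x y : X⦄, x ∈ U → x ≤ y → y ∈ U

open scoped Classical in
/-- The (finite) sum of the values of a finitely supported function on a set `U`. -/
noncomputable def sumOn [AddCommMonoid P] (θ : X →₀ P) (U : Set X) : P :=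
  ∑ x ∈ θ.support.filter (fun x => x ∈ U), θ x

/-- The heavier-higher relation on finitely supported functions from a poset
to an ordered semiring. -/
def HH [Preorder X] [AddCommMonoid P] [PartialOrder P] (θ₁ θ₂ : X →₀ P) : Prop :=
  ∀ U : Set X, UpClosed U → sumOn θ₁ U ≤ sumOn θ₂ U

open scoped Classical in
lemma sumOn_split [AddCommMonoid P] (θ : X →₀ P) (U : Set X) (x : X) (hx : x ∈ U) :
    sumOn θ U = θ x + sumOn θ (U \ {x}) := by
  unfold sumOn
  rw [Finset.sum_filter, Finset.sum_filter]
  by_cases hs : x ∈ θ.support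
  · rw [← Finset.add_sum_erase _ _ hs, ← Finset.add_sum_erase _ _ hs]
    rw [if_pos hx, if_neg (show x ∉ U \ {x} from fun h => h.2 rfl), zero_add]
    congr 1
    apply Finset.sum_congr rfl
    intro y hy
    have hyx : y ≠ x := (Finset.mem_erase.1 hy).1
    by_cases hyU : y ∈ U
    · rw [if_pos hyU, if_pos (show y ∈ U \ {x} from ⟨hyU, hyx⟩)]
    · rw [if_neg hyU, if_neg (fun h => hyU h.1)]
  · have hx0 : θ x = 0 := Finsupp.notMem_support_iff.1 hs
    rw [hx0, zero_add]
    apply Finset.sum_congr rfl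
    intro y hy
    have hyx : y ≠ x := fun h => hs (h ▸ hy)
    by_cases hyU : y ∈ U
    · rw [if_pos hyU, if_pos (show y ∈ U \ {x} from ⟨hyU, hyx⟩)]
    · rw [if_neg hyU, if_neg (fun h => hyU h.1)]

/-- If `P` is cancellative, the heavier-higher relation is antisymmetric. -/
theorem stmt_3 [PartialOrder X] [Semiring P] [PartialOrder P]
    (hbot : ∀ r : P, 0 ≤ r)
    (haddmono : ∀ r s t : P, s ≤ t → r + s ≤ r + t)
    (hmulmono : ∀ r s t u : P, r ≤ s → t ≤ u → r * t ≤ s * u)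
    (hcanc : ∀ r s t : P, r + s ≤ r + t → s ≤ t)
    (θ₁ θ₂ : X →₀ P) (h₁ : HH θ₁ θ₂) (h₂ : HH θ₂ θ₁) :
    θ₁ = θ₂ := by
  ext x
  set U : Set X := {y | x ≤ y} with hU
  have hUup : UpClosed U := fun a b ha hab => le_trans ha hab
  have hU'up : UpClosed (U \ {x}) := by
    rintro a b ⟨ha, hax⟩ hab
    refine ⟨le_trans ha hab, ?_⟩
    intro hbx
    exact hax (le_antisymm (le_trans hab (le_of_eq hbx)) ha)
  have hsumU : sumOn θ₁ U = sumOn θ₂ U := le_antisymm (h₁ U hUup) (h₂ U hUup)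
  have hsumU' : sumOn θ₁ (U \ {x}) = sumOn θ₂ (U \ {x}) :=
    le_antisymm (h₁ _ hU'up) (h₂ _ hU'up)
  have hxU : x ∈ U := le_refl x
  have heq : θ₁ x + sumOn θ₁ (U \ {x}) = θ₂ x + sumOn θ₁ (U \ {x}) := by
    rw [← sumOn_split θ₁ U x hxU, hsumU, sumOn_split θ₂ U x hxU, hsumU']
  have h12 : θ₁ x ≤ θ₂ x := hcanc _ _ _ (by
    rw [add_comm (sumOn θ₁ (U \ {x})) (θ₁ x), add_comm (sumOn θ₁ (U \ {x})) (θ₂ x)]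
    exact le_of_eq heq)
  have h21 : θ₂ x ≤ θ₁ x := hcanc _ _ _ (by
    rw [add_comm (sumOn θ₁ (U \ {x})) (θ₁ x), add_comm (sumOn θ₁ (U \ {x})) (θ₂ x)]
    exact le_of_eq heq.symm)
  exact le_antisymm h12 h21
end

section
/- Let P be an idempotent positive ordered semiring, (Y, ≤, 0, +) an ordered P-module, and f : (X, ≤) → Y a monotone map from a poset X. Then the induced module homomorphism f^β : O_P X → Y, f^β(θ) = ∑_{x ∈ supp(θ)} θ(x)·f(x), is monotone with respect to the heavier-higher preorder on O_P X. -/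
/-! Every term `θ₁ x • f x` of `f^β θ₁` is bounded by `f^β θ₂`: the mass `θ₁ x` is dominated by
the mass of `θ₂` on the up-set `Ici x`, on which `f` only grows. Since `v + v = v` in the module,
a sum of terms bounded by `f^β θ₂` is still bounded by it. -/

open Finsupp

variable {X P : Type*}

theorem upClosed_Ici [Preorder X] (x : X) : UpClosed (Set.Ici x) :=
  fun _ _ ha hab => le_trans ha hab

theorem Finset.sum_le_of_forall_le_of_add_self {ι M : Type*} [AddCommMonoid M] [PartialOrder M]
    [IsOrderedAddMonoid M] {s : Finset ι} {g : ι → M} {b : M} (hb : b + b = b) (h0 : 0 ≤ b)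
    (h : ∀ i ∈ s, g i ≤ b) : ∑ i ∈ s, g i ≤ b :=
  Finset.sum_induction g (· ≤ b) (fun _ _ h₁ h₂ => hb ▸ add_le_add h₁ h₂) h0 h

section Semiring

variable [Semiring P] [PartialOrder P]

theorem le_sumOn [IsOrderedAddMonoid P] (hP : ∀ r : P, 0 ≤ r) {θ : X →₀ P} {U : Set X} {x : X}
    (hx : x ∈ θ.support) (hxU : x ∈ U) : θ x ≤ sumOn θ U := by
  classical
  exact Finset.single_le_sum (fun y _ => hP (θ y)) (Finset.mem_filter.mpr ⟨hx, hxU⟩)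

theorem HH.apply_le_sumOn_Ici [PartialOrder X] [IsOrderedAddMonoid P] (hP : ∀ r : P, 0 ≤ r)
    {θ₁ θ₂ : X →₀ P} (h : HH θ₁ θ₂) {x : X} (hx : x ∈ θ₁.support) :
    θ₁ x ≤ sumOn θ₂ (Set.Ici x) :=
  (le_sumOn hP hx Set.self_mem_Ici).trans (h _ (upClosed_Ici x))

variable {Y : Type*} [AddCommMonoid Y] [PartialOrder Y] [IsOrderedAddMonoid Y] [Module P Y]
  (hP : ∀ r : P, 0 ≤ r) (hsmul : ∀ (r s : P) (v w : Y), r ≤ s → v ≤ w → r • v ≤ s • w)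
include hP hsmul

omit [IsOrderedAddMonoid Y] in
theorem zero_le_smul_of_smul_mono (r : P) (v : Y) : 0 ≤ r • v := by
  simpa using hsmul 0 r v v (hP r) le_rfl

theorem sumOn_Ici_smul_le_sum_smul [PartialOrder X] {f : X → Y} (hf : Monotone f)
    (θ : X →₀ P) (x : X) :
    sumOn θ (Set.Ici x) • f x ≤ ∑ y ∈ θ.support, θ y • f y := by
  classical
  calc sumOn θ (Set.Ici x) • f x
      = ∑ y ∈ θ.support.filter (· ∈ Set.Ici x), θ y • f x := by
        rw [sumOn, Finset.sum_smul]
        congr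
    _ ≤ ∑ y ∈ θ.support.filter (· ∈ Set.Ici x), θ y • f y :=
        Finset.sum_le_sum fun y hy => hsmul _ _ _ _ le_rfl (hf (Finset.mem_filter.mp hy).2)
    _ ≤ ∑ y ∈ θ.support, θ y • f y :=
        Finset.sum_le_sum_of_subset_of_nonneg (Finset.filter_subset _ _)
          fun y _ _ => zero_le_smul_of_smul_mono hP hsmul (θ y) (f y)

theorem HH.sum_smul_le_sum_smul [PartialOrder X] [IsOrderedAddMonoid P]
    (hidem : ∀ v : Y, v + v = v) {f : X → Y} (hf : Monotone f) {θ₁ θ₂ : X →₀ P}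
    (h : HH θ₁ θ₂) : ∑ x ∈ θ₁.support, θ₁ x • f x ≤ ∑ x ∈ θ₂.support, θ₂ x • f x := by
  refine Finset.sum_le_of_forall_le_of_add_self (hidem _) ?_ fun x hx => ?_
  · exact Finset.sum_nonneg fun y _ => zero_le_smul_of_smul_mono hP hsmul (θ₂ y) (f y)
  · exact (hsmul _ _ _ _ (h.apply_le_sumOn_Ici hP hx) le_rfl).trans
      (sumOn_Ici_smul_le_sum_smul hP hsmul hf θ₂ x)

end Semiring

theorem stmt_8_general {Y : Type*} [PartialOrder X] [Semiring P] [PartialOrder P]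
    [AddCommMonoid Y] [Module P Y] [PartialOrder Y]
    (hbot : ∀ r : P, 0 ≤ r)
    (haddmono : ∀ r s t : P, s ≤ t → r + s ≤ r + t)
    (hidem : ∀ r : P, r + r = r)
    (hmod : ∀ (r s : P) (x y z : Y), r ≤ s → x ≤ y → r • x + z ≤ s • y + z)
    (f : X → Y) (hf : Monotone f)
    (θ₁ θ₂ : X →₀ P) (h : HH θ₁ θ₂) :
    (∑ x ∈ θ₁.support, θ₁ x • f x) ≤ ∑ x ∈ θ₂.support, θ₂ x • f x := by
  have : IsOrderedAddMonoid P :=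
    { add_le_add_left := fun r s hrs t => by simpa only [add_comm _ t] using haddmono t r s hrs }
  have : IsOrderedAddMonoid Y :=
    { add_le_add_left := fun v w hvw z => by simpa using hmod 1 1 v w z le_rfl hvw }
  have hsmul (r s : P) (v w : Y) (hrs : r ≤ s) (hvw : v ≤ w) : r • v ≤ s • w := by
    simpa using hmod r s v w 0 hrs hvw
  have hidemY (v : Y) : v + v = v := by
    rw [← two_smul P, ← one_add_one_eq_two, hidem, one_smul]
  exact h.sum_smul_le_sum_smul hbot hsmul hidemY hf

/-- For `P` idempotent, the induced module homomorphism
`f^β θ = ∑_{x ∈ supp θ} θ x • f x` into an ordered `P`-module is monotone with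
respect to the heavier-higher preorder. -/
theorem stmt_8 {Y : Type*} [PartialOrder X] [Semiring P] [PartialOrder P]
    [AddCommMonoid Y] [Module P Y] [PartialOrder Y]
    (hbot : ∀ r : P, 0 ≤ r)
    (haddmono : ∀ r s t : P, s ≤ t → r + s ≤ r + t)
    (hmulmono : ∀ r s t u : P, r ≤ s → t ≤ u → r * t ≤ s * u)
    (hidem : ∀ r : P, r + r = r)
    (hmod : ∀ (r s : P) (x y z : Y), r ≤ s → x ≤ y → r • x + z ≤ s • y + z)
    (f : X → Y) (hf : Monotone f)
    (θ₁ θ₂ : X →₀ P) (h : HH θ₁ θ₂) :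
    (∑ x ∈ θ₁.support, θ₁ x • f x) ≤ ∑ x ∈ θ₂.support, θ₂ x • f x :=
  stmt_8_general hbot haddmono hidem hmod f hf θ₁ θ₂ h
end

section
/- In the two-element ordered semiring 2 = ({0,1}, 0 < 1, max, min), the heavier-higher relation on finitely supported functions from the poset {0 < 1} to 2 fails antisymmetry: δ₁ and δ₀ + δ₁ satisfy δ₁ ⊑ δ₀ + δ₁ and δ₀ + δ₁ ⊑ δ₁ but are distinct. -/
open scoped Classical

/-- In the two-element semiring `2 = ({0,1}, max, min)`, modelled as `Bool`
with `+ = max = ∨` and `· = min = ∧`, the sum of a function over a subset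
is the finite supremum of its values there. -/
noncomputable def sum2 (θ : Bool → Bool) (U : Set Bool) : Bool :=
  (Finset.univ.filter (fun x => x ∈ U)).sup θ

/-- The heavier-higher relation on functions from the poset `{0 < 1}`
(i.e. `Bool` with `false < true`) to the semiring `2`. -/
def HH2 (θ₁ θ₂ : Bool → Bool) : Prop :=
  ∀ U : Set Bool, (∀ ⦃x y : Bool⦄, x ∈ U → x ≤ y → y ∈ U) →
    sum2 θ₁ U ≤ sum2 θ₂ U

/-- The Dirac function `δ_x` in the semiring `2`. -/
def dirac2 (x : Bool) : Bool → Bool := fun y => y == x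

lemma sum2_eq (θ : Bool → Bool) (U : Set Bool) :
    sum2 θ U = ((if false ∈ U then θ false else false) || (if true ∈ U then θ true else false)) := by
  unfold sum2
  by_cases hf : false ∈ U <;> by_cases ht : true ∈ U <;>
    simp [Finset.filter_eq_self, Finset.sup, hf, ht, Bool.univ_eq, Finset.filter_insert,
      Finset.filter_singleton, Bool.or_comm]

/-- The heavier-higher relation on `O_2` of the poset `{0 < 1}` fails
antisymmetry: `δ₁` and `δ₀ + δ₁` are related both ways but distinct. -/
theorem stmt_10 :
    HH2 (dirac2 true) (fun y => dirac2 false y || dirac2 true y) ∧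
    HH2 (fun y => dirac2 false y || dirac2 true y) (dirac2 true) ∧
    dirac2 true ≠ (fun y => dirac2 false y || dirac2 true y) := by
  refine ⟨?_, ?_, ?_⟩
  · intro U hU
    rw [sum2_eq, sum2_eq]
    by_cases hf : false ∈ U <;> by_cases ht : true ∈ U <;> simp [hf, ht, dirac2]
  · intro U hU
    rw [sum2_eq, sum2_eq]
    by_cases hf : false ∈ U <;> by_cases ht : true ∈ U <;> simp [hf, ht, dirac2]
    · exact absurd (hU hf (by simp)) ht
  · intro h
    have := congrFun h false
    simp [dirac2] at this
end

section
/- The set A of functions f : ℕ → ℕ such that f is constant or every fiber f⁻¹(n) is finite, with pointwise addition and multiplication and pointwise order, is a cancellative positive ordered semiring that is not difference-ordered: f₁(n) = n and f₂(n) = n + (n mod 2) satisfy f₁ ≤ f₂ but there is no g ∈ A with f₁ + g = f₂. -/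
/-- The set of functions `ℕ → ℕ` that are constant or have all fibers finite. -/
def A : Set (ℕ → ℕ) :=
  {f | (∃ c, ∀ n, f n = c) ∨ ∀ n : ℕ, (f ⁻¹' {n}).Finite}

lemma fin_Iic (f : ℕ → ℕ) (hf : ∀ n, (f ⁻¹' {n}).Finite) (n : ℕ) :
    (f ⁻¹' (Set.Iic n)).Finite := by
  have h : f ⁻¹' (Set.Iic n) = ⋃ k ∈ Finset.Iic n, f ⁻¹' {k} := by
    ext x; simp
  rw [h]
  exact (Finset.Iic n).finite_toSet.biUnion fun k _ => hf k

/-- `A`, with pointwise operations and the pointwise order, is a cancellative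
positive ordered semiring that is not difference-ordered: `f₁ n = n` and
`f₂ n = n + n % 2` satisfy `f₁ ≤ f₂`, but no `g ∈ A` has `f₁ + g = f₂`. -/
theorem stmt_11 :
    (0 : ℕ → ℕ) ∈ A ∧ (1 : ℕ → ℕ) ∈ A ∧
    (∀ f ∈ A, ∀ g ∈ A, f + g ∈ A) ∧
    (∀ f ∈ A, ∀ g ∈ A, f * g ∈ A) ∧
    (∀ f : ℕ → ℕ, f ∈ A → 0 ≤ f) ∧
    (∀ f g h : ℕ → ℕ, f + g ≤ f + h → g ≤ h) ∧
    (∀ f g f' g' : ℕ → ℕ, f ≤ f' → g ≤ g' → f + g ≤ f' + g') ∧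
    (∀ f g f' g' : ℕ → ℕ, f ≤ f' → g ≤ g' → f * g ≤ f' * g') ∧
    (fun n : ℕ => n) ≤ (fun n : ℕ => n + n % 2) ∧
    ¬ ∃ g ∈ A, (fun n : ℕ => n) + g = fun n : ℕ => n + n % 2 := by
  refine ⟨Or.inl ⟨0, fun n => rfl⟩, Or.inl ⟨1, fun n => rfl⟩, ?_, ?_, ?_, ?_, ?_, ?_, ?_, ?_⟩
  · -- addition
    rintro f (⟨c, hc⟩ | hf) g (⟨d, hd⟩ | hg)
    · exact Or.inl ⟨c + d, fun n => by simp [Pi.add_apply, hc n, hd n]⟩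
    · refine Or.inr fun n => (hg (n - c)).subset fun x hx => ?_
      simp only [Set.mem_preimage, Set.mem_singleton_iff, Pi.add_apply] at hx ⊢
      have := hc x; omega
    · refine Or.inr fun n => (hf (n - d)).subset fun x hx => ?_
      simp only [Set.mem_preimage, Set.mem_singleton_iff, Pi.add_apply] at hx ⊢
      have := hd x; omega
    · refine Or.inr fun n => (fin_Iic f hf n).subset fun x hx => ?_
      simp only [Set.mem_preimage, Set.mem_singleton_iff, Set.mem_Iic, Pi.add_apply] at hx ⊢
      omega
  · -- multiplication
    rintro f hfA g hgA
    rcases hfA with ⟨c, hc⟩ | hf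
    · rcases Nat.eq_zero_or_pos c with rfl | hcpos
      · exact Or.inl ⟨0, fun n => by simp [Pi.mul_apply, hc n]⟩
      rcases hgA with ⟨d, hd⟩ | hg
      · exact Or.inl ⟨c * d, fun n => by simp [Pi.mul_apply, hc n, hd n]⟩
      · refine Or.inr fun n => (fin_Iic g hg n).subset fun x hx => ?_
        simp only [Set.mem_preimage, Set.mem_singleton_iff, Set.mem_Iic, Pi.mul_apply] at hx ⊢
        calc g x ≤ c * g x := Nat.le_mul_of_pos_left _ hcpos
        _ = n := by rw [hc x] at hx; exact hx
    · rcases hgA with ⟨d, hd⟩ | hg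
      · rcases Nat.eq_zero_or_pos d with rfl | hdpos
        · exact Or.inl ⟨0, fun n => by simp [Pi.mul_apply, hd n]⟩
        · refine Or.inr fun n => (fin_Iic f hf n).subset fun x hx => ?_
          simp only [Set.mem_preimage, Set.mem_singleton_iff, Set.mem_Iic, Pi.mul_apply] at hx ⊢
          calc f x ≤ f x * d := Nat.le_mul_of_pos_right _ hdpos
          _ = n := by rw [hd x] at hx; exact hx
      · refine Or.inr fun n => ((fin_Iic f hf n).union (hg 0)).subset fun x hx => ?_
        simp only [Set.mem_preimage, Set.mem_singleton_iff, Set.mem_union, Set.mem_Iic,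
          Pi.mul_apply] at hx ⊢
        rcases Nat.eq_zero_or_pos (g x) with h0 | hpos
        · exact Or.inr h0
        · exact Or.inl (le_trans (Nat.le_mul_of_pos_right _ hpos) hx.le)
  · intro f _ n; exact Nat.zero_le _
  · intro f g h hle n; exact le_of_add_le_add_left (hle n)
  · intro f g f' g' h1 h2 n; exact Nat.add_le_add (h1 n) (h2 n)
  · intro f g f' g' h1 h2 n; exact Nat.mul_le_mul (h1 n) (h2 n)
  · intro n; exact Nat.le_add_right _ _
  · rintro ⟨g, hgA, hg⟩
    have hgeq : ∀ n, g n = n % 2 := fun n => by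
      have := congrFun hg n
      simp only [Pi.add_apply] at this
      omega
    rcases hgA with ⟨c, hc⟩ | hfin
    · have h0 := hc 0; have h1 := hc 1
      rw [hgeq 0] at h0; rw [hgeq 1] at h1; omega
    · have hinf : (g ⁻¹' {0}).Infinite := by
        refine Set.infinite_of_injective_forall_mem (f := fun k : ℕ => 2 * k)
          (fun a b h => by simp only [] at h; omega) fun k => ?_
        simp only [Set.mem_preimage, Set.mem_singleton_iff, hgeq]
        omega
      exact hinf (hfin 0)
end

section
/- Let P be a cancellative, difference-ordered, division positive ordered semiring. Every finite unguarded subprobabilistic system, given by an n×n matrix (a_ij) over P and subdistributions θ₁,…,θₙ over a poset Y with a_{i1}+⋯+a_{in}+∑_y θ_i(y) ≤ 1, has a least solution (x₁,…,xₙ) in subdistributions over Y (ordered pointwise) to the system x_i = a_{i1}x₁ + ⋯ + a_{in}xₙ + θ_i for all i. -/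
noncomputable def mass {Y P : Type*} [AddCommMonoid P] (θ : Y →₀ P) : P :=
  ∑ y ∈ θ.support, θ y

/-!
Gaussian elimination of the last unknown. Write `1 = a_LL + t`. If `t` is invertible with inverse
`s`, the last equation says `x_L = s • (∑_{j<L} a_Lj • x_j + θ_L)`; substituting this into the other
equations gives a system in one unknown fewer, still subprobabilistic because `s` times the rest of
row `L` is at most `s * t = 1`. If `t = 0`, the row bound forces the rest of row `L` to vanish and
`s = 0` does the same job. Back substitution of the solution of the reduced system lies below every
prefixed point `x' ≥ a • x' + θ`: cancelling `a_LL • x'_L` in the last inequality gives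
`s • (…) ≤ x'_L`, so the first `n` components of `x'` form a prefixed point of the reduced system.
-/

open Finset

section Mass

variable {Y P : Type*}

lemma mass_eq_sum [AddCommMonoid P] (θ : Y →₀ P) : mass θ = θ.sum fun _ v => v := rfl

lemma mass_add [AddCommMonoid P] (θ φ : Y →₀ P) : mass (θ + φ) = mass θ + mass φ :=
  Finsupp.sum_add_index' (h := fun _ v => v) (fun _ => rfl) fun _ _ _ => rfl

lemma mass_sum [AddCommMonoid P] {ι : Type*} (s : Finset ι) (f : ι → Y →₀ P) :
    mass (∑ i ∈ s, f i) = ∑ i ∈ s, mass (f i) :=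
  (Finsupp.sum_finsetSum_index (h := fun _ v => v) (fun _ => rfl) fun _ _ _ => rfl).symm

lemma mass_smul [Semiring P] (c : P) (θ : Y →₀ P) : mass (c • θ) = c * mass θ := by
  rw [mass_eq_sum, mass_eq_sum, Finsupp.sum_smul_index' fun _ => rfl, Finsupp.mul_sum]
  rfl

lemma eq_zero_of_mass_eq_zero [AddCommMonoid P] [PartialOrder P] [CanonicallyOrderedAdd P]
    {θ : Y →₀ P} (h : mass θ = 0) : θ = 0 := by
  ext y
  by_contra hy
  exact hy (sum_eq_zero_iff.mp h y (Finsupp.mem_support_iff.mpr hy))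

end Mass

noncomputable section System

variable {P Y : Type*} [Semiring P]

def sysMap {n : ℕ} (a : Fin n → Fin n → P) (θ : Fin n → Y →₀ P) (x : Fin n → Y →₀ P) :
    Fin n → Y →₀ P :=
  fun i => ∑ j, a i j • x j + θ i

variable {n : ℕ} (a : Fin (n + 1) → Fin (n + 1) → P) (θ : Fin (n + 1) → Y →₀ P) (s : P)

def lastRow (u : Fin n → Y →₀ P) : Y →₀ P :=
  ∑ j, a (Fin.last n) j.castSucc • u j + θ (Fin.last n)

def backSubst (u : Fin n → Y →₀ P) : Fin (n + 1) → Y →₀ P :=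
  Fin.snoc u (s • lastRow a θ u)

def elimMatrix : Fin n → Fin n → P :=
  fun i j => a i.castSucc j.castSucc + a i.castSucc (Fin.last n) * s * a (Fin.last n) j.castSucc

def elimVec : Fin n → Y →₀ P :=
  fun i => θ i.castSucc + (a i.castSucc (Fin.last n) * s) • θ (Fin.last n)

lemma sysMap_last (x : Fin (n + 1) → Y →₀ P) :
    sysMap a θ x (Fin.last n) =
      lastRow a θ (Fin.init x) + a (Fin.last n) (Fin.last n) • x (Fin.last n) := by
  simp only [sysMap, lastRow, Fin.sum_univ_castSucc, Fin.init]
  abel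

lemma sysMap_elim (u : Fin n → Y →₀ P) (i : Fin n) :
    sysMap (elimMatrix a s) (elimVec a θ s) u i = sysMap a θ (backSubst a θ s u) i.castSucc := by
  simp only [sysMap, elimMatrix, elimVec, backSubst, lastRow, Fin.sum_univ_castSucc,
    Fin.snoc_castSucc, Fin.snoc_last, add_smul, sum_add_distrib, smul_add, smul_sum, mul_smul]
  abel

end System

section Elimination

variable {P Y : Type*} [Semiring P] [PartialOrder P] [IsOrderedCancelAddMonoid P]
  {n : ℕ} (a : Fin (n + 1) → Fin (n + 1) → P) (θ : Fin (n + 1) → Y →₀ P) {s t : P}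

lemma sum_lastRow_add_mass_le (hL : ∑ j, a (Fin.last n) j + mass (θ (Fin.last n)) ≤ 1)
    (ht : a (Fin.last n) (Fin.last n) + t = 1) :
    ∑ j : Fin n, a (Fin.last n) j.castSucc + mass (θ (Fin.last n)) ≤ t := by
  rw [Fin.sum_univ_castSucc, ← ht, add_right_comm, add_comm] at hL
  exact le_of_add_le_add_left hL

variable [CanonicallyOrderedAdd P]

lemma sysMap_mono {n : ℕ} (a : Fin n → Fin n → P) (θ : Fin n → Y →₀ P) :
    Monotone (sysMap a θ) := fun _ _ h _ =>
  add_le_add_left (sum_le_sum fun j _ => smul_le_smul_of_nonneg_left (h j) zero_le) _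

lemma lastRow_mono : Monotone (lastRow a θ) := fun _ _ h =>
  add_le_add_left (sum_le_sum fun j _ => smul_le_smul_of_nonneg_left (h j) zero_le) _

lemma backSubst_mono : Monotone (backSubst a θ s) := by
  intro u v h i
  induction i using Fin.lastCases with
  | last => simpa [backSubst] using smul_le_smul_of_nonneg_left (lastRow_mono a θ h) zero_le
  | cast i => simpa [backSubst] using h i

lemma mass_lastRow_le {u : Fin n → Y →₀ P} (hu : ∀ j, mass (u j) ≤ 1) :
    mass (lastRow a θ u) ≤ ∑ j : Fin n, a (Fin.last n) j.castSucc + mass (θ (Fin.last n)) := by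
  rw [lastRow, mass_add, mass_sum]
  gcongr with j
  rw [mass_smul]
  exact mul_le_of_le_one_right' (hu j)

lemma sum_elimMatrix_add_mass_le_one (hsub : ∀ i, ∑ j, a i j + mass (θ i) ≤ 1)
    (ht : a (Fin.last n) (Fin.last n) + t = 1) (hst : s * t ≤ 1) (i : Fin n) :
    ∑ j, elimMatrix a s i j + mass (elimVec a θ s i) ≤ 1 := by
  set c := a i.castSucc (Fin.last n)
  have hpivot : c * s * (∑ j : Fin n, a (Fin.last n) j.castSucc + mass (θ (Fin.last n))) ≤ c :=
    calc _ ≤ c * s * t := by gcongr; exact sum_lastRow_add_mass_le a θ (hsub _) ht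
      _ ≤ c := by rw [mul_assoc]; exact mul_le_of_le_one_right' hst
  calc ∑ j, elimMatrix a s i j + mass (elimVec a θ s i)
      = ∑ j : Fin n, a i.castSucc j.castSucc + mass (θ i.castSucc) +
          c * s * (∑ j : Fin n, a (Fin.last n) j.castSucc + mass (θ (Fin.last n))) := by
        simp only [elimMatrix, elimVec, mass_add, mass_smul, sum_add_distrib, mul_sum, mul_add, c]
        abel
    _ ≤ ∑ j : Fin n, a i.castSucc j.castSucc + mass (θ i.castSucc) + c := by gcongr
    _ = ∑ j, a i.castSucc j + mass (θ i.castSucc) := by rw [Fin.sum_univ_castSucc]; abel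
    _ ≤ 1 := hsub _

lemma sysMap_backSubst_eq (hL : ∑ j, a (Fin.last n) j + mass (θ (Fin.last n)) ≤ 1)
    (ht : a (Fin.last n) (Fin.last n) + t = 1) (hts : t = 0 ∨ t * s = 1)
    {z : Fin n → Y →₀ P} (hz : sysMap (elimMatrix a s) (elimVec a θ s) z = z)
    (hmass : ∀ j, mass (z j) ≤ 1) :
    sysMap a θ (backSubst a θ s z) = backSubst a θ s z := by
  funext i
  induction i using Fin.lastCases with
  | last =>
    rw [sysMap_last, backSubst, Fin.init_snoc, Fin.snoc_last]
    set w := lastRow a θ z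
    rcases hts with rfl | hts
    · have hw : w = 0 := eq_zero_of_mass_eq_zero <| nonpos_iff_eq_zero.mp <|
        (mass_lastRow_le a θ hmass).trans (sum_lastRow_add_mass_le a θ hL ht)
      rw [hw, smul_zero, smul_zero, add_zero]
    · calc w + a (Fin.last n) (Fin.last n) • s • w
          = ((a (Fin.last n) (Fin.last n) + t) * s) • w := by
            rw [add_mul, add_smul, hts, one_smul, mul_smul, add_comm]
        _ = s • w := by rw [ht, one_mul]
  | cast i => rw [← sysMap_elim, hz]; simp [backSubst]

lemma mass_backSubst_le_one (hL : ∑ j, a (Fin.last n) j + mass (θ (Fin.last n)) ≤ 1)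
    (ht : a (Fin.last n) (Fin.last n) + t = 1) (hst : s * t ≤ 1)
    {z : Fin n → Y →₀ P} (hmass : ∀ j, mass (z j) ≤ 1) (i : Fin (n + 1)) :
    mass (backSubst a θ s z i) ≤ 1 := by
  induction i using Fin.lastCases with
  | last =>
    rw [backSubst, Fin.snoc_last, mass_smul]
    calc s * mass (lastRow a θ z) ≤ s * t := by
          gcongr; exact (mass_lastRow_le a θ hmass).trans (sum_lastRow_add_mass_le a θ hL ht)
      _ ≤ 1 := hst
  | cast i => simpa [backSubst] using hmass i

lemma smul_lastRow_init_le (ht : a (Fin.last n) (Fin.last n) + t = 1) (hst : s * t ≤ 1)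
    {x : Fin (n + 1) → Y →₀ P} (hx : sysMap a θ x ≤ x) :
    s • lastRow a θ (Fin.init x) ≤ x (Fin.last n) := by
  set c := a (Fin.last n) (Fin.last n)
  have hrow : c • x (Fin.last n) + lastRow a θ (Fin.init x) ≤
      c • x (Fin.last n) + t • x (Fin.last n) := by
    rw [← add_smul, ht, one_smul, add_comm, ← sysMap_last]
    exact hx _
  calc s • lastRow a θ (Fin.init x) ≤ s • t • x (Fin.last n) :=
        smul_le_smul_of_nonneg_left (le_of_add_le_add_left hrow) zero_le
    _ = (s * t) • x (Fin.last n) := (mul_smul _ _ _).symm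
    _ ≤ (1 : P) • x (Fin.last n) := smul_le_smul_of_nonneg_right hst zero_le
    _ = x (Fin.last n) := one_smul _ _

lemma backSubst_init_le (ht : a (Fin.last n) (Fin.last n) + t = 1) (hst : s * t ≤ 1)
    {x : Fin (n + 1) → Y →₀ P} (hx : sysMap a θ x ≤ x) : backSubst a θ s (Fin.init x) ≤ x := by
  intro i
  induction i using Fin.lastCases with
  | last => simpa [backSubst] using smul_lastRow_init_le a θ ht hst hx
  | cast i => simp [backSubst, Fin.init]

lemma sysMap_elim_init_le (ht : a (Fin.last n) (Fin.last n) + t = 1) (hst : s * t ≤ 1)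
    {x : Fin (n + 1) → Y →₀ P} (hx : sysMap a θ x ≤ x) :
    sysMap (elimMatrix a s) (elimVec a θ s) (Fin.init x) ≤ Fin.init x := fun i => by
  rw [sysMap_elim]
  exact (sysMap_mono a θ (backSubst_init_le a θ ht hst hx) _).trans (hx _)

end Elimination

lemma exists_mul_le_one_and_eq_zero_or_mul_eq_one {P : Type*} [Semiring P] [PartialOrder P]
    [CanonicallyOrderedAdd P] (hunit : ∀ r : P, r ≠ 0 → IsUnit r) (t : P) :
    ∃ s, s * t ≤ 1 ∧ (t = 0 ∨ t * s = 1) := by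
  by_cases ht : t = 0
  · exact ⟨0, by simp, .inl ht⟩
  · obtain ⟨u, rfl⟩ := hunit t ht
    exact ⟨↑u⁻¹, u.inv_mul.le, .inr u.mul_inv⟩

section LeastFixedPoint

variable {P Y : Type*} [Semiring P] [PartialOrder P] [CanonicallyOrderedAdd P]
  [IsOrderedCancelAddMonoid P]

theorem exists_fixedPoint_le_prefixedPoints (hunit : ∀ r : P, r ≠ 0 → IsUnit r) :
    ∀ {n : ℕ} (a : Fin n → Fin n → P) (θ : Fin n → Y →₀ P),
      (∀ i, ∑ j, a i j + mass (θ i) ≤ 1) →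
      ∃ x, sysMap a θ x = x ∧ (∀ i, mass (x i) ≤ 1) ∧ ∀ x', sysMap a θ x' ≤ x' → x ≤ x'
  | 0, _, _, _ => ⟨0, funext fun i => i.elim0, fun i => i.elim0, fun _ _ i => i.elim0⟩
  | n + 1, a, θ, hsub => by
    have hdiag : a (Fin.last n) (Fin.last n) ≤ 1 :=
      (single_le_sum (fun _ _ => zero_le) (mem_univ _)).trans (le_self_add.trans (hsub _))
    obtain ⟨t, ht⟩ := exists_add_of_le hdiag
    obtain ⟨s, hst, hts⟩ := exists_mul_le_one_and_eq_zero_or_mul_eq_one hunit t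
    obtain ⟨z, hz, hzmass, hzleast⟩ := exists_fixedPoint_le_prefixedPoints hunit
      (elimMatrix a s) (elimVec a θ s) (sum_elimMatrix_add_mass_le_one a θ hsub ht.symm hst)
    refine ⟨backSubst a θ s z, sysMap_backSubst_eq a θ (hsub _) ht.symm hts hz hzmass,
      mass_backSubst_le_one a θ (hsub _) ht.symm hst hzmass, fun x hx => ?_⟩
    exact (backSubst_mono a θ (hzleast _ (sysMap_elim_init_le a θ ht.symm hst hx))).trans
      (backSubst_init_le a θ ht.symm hst hx)

end LeastFixedPoint

theorem stmt_13_general {P Y : Type*} [Semiring P] [PartialOrder P]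
    (hbot : ∀ r : P, 0 ≤ r)
    (haddmono : ∀ r s t : P, s ≤ t → r + s ≤ r + t)
    (hcanc : ∀ r s t : P, r + s ≤ r + t → s ≤ t)
    (hdiff : ∀ r s : P, r ≤ s → ∃ t : P, r + t = s)
    (hdiv : ∀ r : P, 0 < r → ∃ s : P, r * s = 1 ∧ s * r = 1)
    (n : ℕ) (a : Fin n → Fin n → P) (θ : Fin n → (Y →₀ P))
    (hsub : ∀ i, (∑ j, a i j) + mass (θ i) ≤ 1) :
    ∃ x : Fin n → (Y →₀ P),
      (∀ i, x i = (∑ j, a i j • x j) + θ i) ∧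
      (∀ i, mass (x i) ≤ 1) ∧
      (∀ x' : Fin n → (Y →₀ P),
        (∀ i, x' i = (∑ j, a i j • x' j) + θ i) →
        (∀ i, mass (x' i) ≤ 1) →
        ∀ i y, x i y ≤ x' i y) := by
  have : IsOrderedCancelAddMonoid P :=
    { add_le_add_left := fun r s h u => by simpa only [add_comm _ u] using haddmono u r s h
      le_of_add_le_add_left := hcanc }
  have : CanonicallyOrderedAdd P :=
    { exists_add_of_le := fun h => (hdiff _ _ h).imp fun _ => Eq.symm
      le_self_add := fun r s => by simpa using haddmono r 0 s (hbot s)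
      le_add_self := fun r s => by simpa [add_comm] using haddmono r 0 s (hbot s) }
  have hunit (r : P) (hr : r ≠ 0) : IsUnit r :=
    isUnit_iff_exists.mpr (hdiv r (pos_iff_ne_zero.mpr hr))
  obtain ⟨x, hfix, hmass, hleast⟩ := exists_fixedPoint_le_prefixedPoints hunit a θ hsub
  exact ⟨x, fun i => (congrFun hfix i).symm, hmass,
    fun x' hx' _ => hleast x' fun i => (hx' i).ge⟩

/-- Every finite unguarded subprobabilistic system over a cancellative,
difference-ordered, division positive ordered semiring `P` has a least
solution in subdistributions (ordered pointwise). -/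
theorem stmt_13 {P Y : Type*} [Semiring P] [PartialOrder P] [PartialOrder Y]
    (hbot : ∀ r : P, 0 ≤ r)
    (haddmono : ∀ r s t : P, s ≤ t → r + s ≤ r + t)
    (hmulmono : ∀ r s t u : P, r ≤ s → t ≤ u → r * t ≤ s * u)
    (hcanc : ∀ r s t : P, r + s ≤ r + t → s ≤ t)
    (hdiff : ∀ r s : P, r ≤ s → ∃ t : P, r + t = s)
    (hdiv : ∀ r : P, 0 < r → ∃ s : P, r * s = 1 ∧ s * r = 1)
    (n : ℕ) (a : Fin n → Fin n → P) (θ : Fin n → (Y →₀ P))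
    (hsub : ∀ i, (∑ j, a i j) + mass (θ i) ≤ 1) :
    ∃ x : Fin n → (Y →₀ P),
      (∀ i, x i = (∑ j, a i j • x j) + θ i) ∧
      (∀ i, mass (x i) ≤ 1) ∧
      (∀ x' : Fin n → (Y →₀ P),
        (∀ i, x' i = (∑ j, a i j • x' j) + θ i) →
        (∀ i, mass (x' i) ≤ 1) →
        ∀ i y, x i y ≤ x' i y) :=
  stmt_13_general hbot haddmono hcanc hdiff hdiv n a θ hsub
end

section
/- Let R be the set of n-tuples in (ℝ≥0)ⁿ in which any zero coordinate forces all coordinates to be zero, with componentwise addition and multiplication, ordered by r ≤* s iff r = s or r_i < s_i for all i. Then R is a cancellative, difference-ordered, division positive ordered semiring. -/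
open scoped NNReal

/-- The set of `n`-tuples of nonnegative reals in which any zero coordinate
forces all coordinates to be zero. -/
def R (n : ℕ) : Set (Fin n → ℝ≥0) :=
  {r | (∃ i, r i = 0) → ∀ j, r j = 0}

/-- The order `r ≤* s` iff `r = s` or `r i < s i` for all `i`. -/
def leStar {n : ℕ} (r s : Fin n → ℝ≥0) : Prop :=
  r = s ∨ ∀ i, r i < s i

/-!
An element of `R n` is either `0` or positive in every coordinate, and `r ≤* s` means
`r = s` or `r < s` strictly in every coordinate. Each axiom therefore splits into an
equality case, which is trivial, and a strictly positive case, which is the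
corresponding coordinatewise fact about positive reals (for the difference, `s - r`
is positive in every coordinate; for the inverse, `r⁻¹` is).
-/

variable {n : ℕ}

theorem mem_R_iff {r : Fin n → ℝ≥0} : r ∈ R n ↔ r = 0 ∨ ∀ i, 0 < r i := by
  constructor
  · intro hr
    by_cases hzero : ∃ i, r i = 0
    · exact .inl (funext (hr hzero))
    · exact .inr fun i => pos_iff_ne_zero.mpr fun hi => hzero ⟨i, hi⟩
  · rintro (rfl | hpos) ⟨i, hi⟩
    · exact fun _ => rfl
    · exact absurd hi (hpos i).ne'

theorem pos_of_mem_R {r : Fin n → ℝ≥0} (hr : r ∈ R n) (hr0 : r ≠ 0) (i : Fin n) : 0 < r i :=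
  (mem_R_iff.mp hr).resolve_left hr0 i

theorem mem_R_of_pos {r : Fin n → ℝ≥0} (hpos : ∀ i, 0 < r i) : r ∈ R n :=
  mem_R_iff.mpr (.inr hpos)

theorem zero_mem_R : (0 : Fin n → ℝ≥0) ∈ R n :=
  mem_R_iff.mpr (.inl rfl)

theorem one_mem_R : (1 : Fin n → ℝ≥0) ∈ R n :=
  mem_R_of_pos fun _ => one_pos

theorem add_mem_R {r s : Fin n → ℝ≥0} (hr : r ∈ R n) (hs : s ∈ R n) : r + s ∈ R n := by
  rcases mem_R_iff.mp hr with rfl | hrpos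
  · rwa [zero_add]
  · exact mem_R_of_pos fun i => add_pos_of_pos_of_nonneg (hrpos i) zero_le

theorem mul_mem_R {r s : Fin n → ℝ≥0} (hr : r ∈ R n) (hs : s ∈ R n) : r * s ∈ R n := by
  rcases mem_R_iff.mp hr with rfl | hrpos
  · rw [zero_mul]; exact zero_mem_R
  rcases mem_R_iff.mp hs with rfl | hspos
  · rw [mul_zero]; exact zero_mem_R
  exact mem_R_of_pos fun i => mul_pos (hrpos i) (hspos i)

theorem leStar_refl (r : Fin n → ℝ≥0) : leStar r r :=
  .inl rfl

theorem leStar_antisymm {r s : Fin n → ℝ≥0} (hrs : leStar r s) (hsr : leStar s r) : r = s := by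
  rcases hrs with rfl | hlt
  · rfl
  rcases hsr with rfl | hgt
  · rfl
  exact funext fun i => absurd (hgt i) (lt_asymm (hlt i))

theorem leStar_trans {r s t : Fin n → ℝ≥0} (hrs : leStar r s) (hst : leStar s t) :
    leStar r t := by
  rcases hrs with rfl | hrs
  · exact hst
  rcases hst with rfl | hst
  · exact .inr hrs
  exact .inr fun i => (hrs i).trans (hst i)

theorem zero_leStar {r : Fin n → ℝ≥0} (hr : r ∈ R n) : leStar 0 r := by
  rcases mem_R_iff.mp hr with rfl | hpos
  · exact leStar_refl 0
  · exact .inr hpos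

theorem leStar.add_left {s t : Fin n → ℝ≥0} (h : leStar s t) (r : Fin n → ℝ≥0) :
    leStar (r + s) (r + t) := by
  rcases h with rfl | h
  · exact leStar_refl _
  · exact .inr fun i => add_lt_add_of_le_of_lt le_rfl (h i)

theorem leStar.of_add_left {r s t : Fin n → ℝ≥0} (h : leStar (r + s) (r + t)) :
    leStar s t := by
  rcases h with h | h
  · exact .inl (add_left_cancel h)
  · exact .inr fun i => lt_of_add_lt_add_left (h i)

theorem leStar.mul_left {r t u : Fin n → ℝ≥0} (hr : r ∈ R n) (h : leStar t u) :
    leStar (r * t) (r * u) := by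
  rcases mem_R_iff.mp hr with rfl | hpos
  · simp only [zero_mul]; exact leStar_refl 0
  rcases h with rfl | h
  · exact leStar_refl _
  · exact .inr fun i => mul_lt_mul_of_pos_left (h i) (hpos i)

theorem leStar.mul_right {r s t : Fin n → ℝ≥0} (ht : t ∈ R n) (h : leStar r s) :
    leStar (r * t) (s * t) := by
  simpa only [mul_comm _ t] using h.mul_left ht

theorem leStar.mul {r s t u : Fin n → ℝ≥0} (hs : s ∈ R n) (ht : t ∈ R n)
    (hrs : leStar r s) (htu : leStar t u) : leStar (r * t) (s * u) :=
  leStar_trans (hrs.mul_right ht) (htu.mul_left hs)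

theorem leStar.exists_add_eq {r s : Fin n → ℝ≥0} (h : leStar r s) :
    ∃ t ∈ R n, r + t = s := by
  rcases h with rfl | h
  · exact ⟨0, zero_mem_R, add_zero r⟩
  · exact ⟨s - r, mem_R_of_pos fun i => tsub_pos_of_lt (h i),
      funext fun i => add_tsub_cancel_of_le (h i).le⟩

theorem inv_mem_R_of_ne_zero {r : Fin n → ℝ≥0} (hr : r ∈ R n) (hr0 : r ≠ 0) :
    r⁻¹ ∈ R n ∧ r * r⁻¹ = 1 ∧ r⁻¹ * r = 1 := by
  have hpos := pos_of_mem_R hr hr0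
  exact ⟨mem_R_of_pos fun i => inv_pos.mpr (hpos i),
    funext fun i => mul_inv_cancel₀ (hpos i).ne',
    funext fun i => inv_mul_cancel₀ (hpos i).ne'⟩

/-- `R` with componentwise operations and the order `≤*` is a cancellative,
difference-ordered, division positive ordered semiring. -/
theorem stmt_16 (n : ℕ) :
    -- partial order
    (∀ r, leStar (n := n) r r) ∧
    (∀ r s : Fin n → ℝ≥0, leStar r s → leStar s r → r = s) ∧
    (∀ r s t : Fin n → ℝ≥0, leStar r s → leStar s t → leStar r t) ∧
    -- `R` contains `0` and `1` and is closed under the operations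
    (0 : Fin n → ℝ≥0) ∈ R n ∧ (1 : Fin n → ℝ≥0) ∈ R n ∧
    (∀ r ∈ R n, ∀ s ∈ R n, r + s ∈ R n) ∧
    (∀ r ∈ R n, ∀ s ∈ R n, r * s ∈ R n) ∧
    -- `0` is the bottom element
    (∀ r ∈ R n, leStar 0 r) ∧
    -- monotonicity of addition and multiplication
    (∀ r s t : Fin n → ℝ≥0, leStar s t → leStar (r + s) (r + t)) ∧
    (∀ r s t u : Fin n → ℝ≥0, r ∈ R n → s ∈ R n → t ∈ R n → u ∈ R n →
      leStar r s → leStar t u → leStar (r * t) (s * u)) ∧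
    -- cancellativity
    (∀ r s t : Fin n → ℝ≥0, leStar (r + s) (r + t) → leStar s t) ∧
    -- difference-orderedness
    (∀ r ∈ R n, ∀ s ∈ R n, leStar r s → ∃ t ∈ R n, r + t = s) ∧
    -- division
    (∀ r ∈ R n, r ≠ 0 → ∃ s ∈ R n, r * s = 1 ∧ s * r = 1) :=
  ⟨leStar_refl, fun _ _ => leStar_antisymm, fun _ _ _ => leStar_trans,
    zero_mem_R, one_mem_R, fun _ hr _ hs => add_mem_R hr hs, fun _ hr _ hs => mul_mem_R hr hs,
    fun _ => zero_leStar, fun r _ _ h => h.add_left r,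
    fun _ _ _ _ _ hs ht _ => leStar.mul hs ht, fun _ _ _ => leStar.of_add_left,
    fun _ _ _ _ h => h.exists_add_eq, fun r hr hr0 => ⟨r⁻¹, inv_mem_R_of_ne_zero hr hr0⟩⟩
end

section
/- With (M, η, ρ) a T-presented monad and μ_X = (id_{MX})^{ρ_{MX}}, the assignment Φ(X, α) = (X, (id_X)^α) defines a functor from T to the Eilenberg–Moore category of (M, η, μ); and if T is closed under split epis (if (X,α) ∈ T and there is a homomorphism m : (X,α) → (Y,β) with a section i, m ∘ i = id_Y, then (Y,β) ∈ T), then Φ is an isomorphism of categories with inverse Θ(X, γ) = (X, γ ∘ ρ_X ∘ S(η_X)). -/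
open CategoryTheory

/-- Let `(M, η, ρ)` be a `T`-presented monad and `μ` the induced multiplication.
Then `Φ (X, α) = (X, (𝟙 X)^α)` defines a functor from `T` to the
Eilenberg–Moore category of `(M, η, μ)`, and, if `T` is closed under split
epimorphisms, `Φ` is an isomorphism of categories with inverse
`Θ (X, γ) = (X, γ ∘ ρ_X ∘ S (η_X))`.  Here this is expressed by:
(1) `Φ` lands in Eilenberg–Moore algebras; (2) `Φ` sends `S`-algebra
homomorphisms to Eilenberg–Moore homomorphisms; (3) `Θ` lands in `T`;
(4) `Θ ∘ Φ = id`; (5) `Φ ∘ Θ = id`. -/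
theorem stmt_18 {C : Type*} [Category C] (S M : C ⥤ C)
    (η : 𝟭 C ⟶ M) (ρ : M ⋙ S ⟶ M)
    (T : Endofunctor.Algebra S → Prop)
    (hfree : ∀ X : C, T ⟨M.obj X, ρ.app X⟩)
    (huniv : ∀ (A : Endofunctor.Algebra S) (X : C) (f : X ⟶ A.a),
      ∃! g : M.obj X ⟶ A.a,
        (ρ.app X ≫ g = S.map g ≫ A.str) ∧ η.app X ≫ g = f)
    (μ : M ⋙ M ⟶ M)
    (hμ : ∀ X : C,
      (ρ.app (M.obj X) ≫ μ.app X = S.map (μ.app X) ≫ ρ.app X) ∧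
      η.app (M.obj X) ≫ μ.app X = 𝟙 (M.obj X)) :
    -- (1) `Φ` sends objects of `T` to Eilenberg–Moore algebras
    (∀ A : Endofunctor.Algebra S, T A →
      ∀ γ : M.obj A.a ⟶ A.a,
        (ρ.app A.a ≫ γ = S.map γ ≫ A.str) → (η.app A.a ≫ γ = 𝟙 A.a) →
        μ.app A.a ≫ γ = M.map γ ≫ γ) ∧
    -- (2) `Φ` sends `S`-algebra homomorphisms between objects of `T`
    --     to Eilenberg–Moore homomorphisms
    (∀ A B : Endofunctor.Algebra S, T A → T B →
      ∀ γA : M.obj A.a ⟶ A.a, ∀ γB : M.obj B.a ⟶ B.a,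
        (ρ.app A.a ≫ γA = S.map γA ≫ A.str) → (η.app A.a ≫ γA = 𝟙 A.a) →
        (ρ.app B.a ≫ γB = S.map γB ≫ B.str) → (η.app B.a ≫ γB = 𝟙 B.a) →
        ∀ h : A ⟶ B, M.map h.f ≫ γB = γA ≫ h.f) ∧
    -- now assume `T` is closed under split epimorphisms
    ((∀ A B : Endofunctor.Algebra S, T A →
        ∀ (m : A ⟶ B) (i : B.a ⟶ A.a), i ≫ m.f = 𝟙 B.a → T B) →
      -- (3) `Θ` sends Eilenberg–Moore algebras to objects of `T`
      (∀ (X : C) (γ : M.obj X ⟶ X),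
        (η.app X ≫ γ = 𝟙 X) → (μ.app X ≫ γ = M.map γ ≫ γ) →
        T ⟨X, S.map (η.app X) ≫ ρ.app X ≫ γ⟩) ∧
      -- (4) `Θ ∘ Φ = id` on objects
      (∀ A : Endofunctor.Algebra S, T A →
        ∀ γ : M.obj A.a ⟶ A.a,
          (ρ.app A.a ≫ γ = S.map γ ≫ A.str) → (η.app A.a ≫ γ = 𝟙 A.a) →
          S.map (η.app A.a) ≫ ρ.app A.a ≫ γ = A.str) ∧
      -- (5) `Φ ∘ Θ = id` on objects: `γ` is the universal homomorphism
      --     out of `(M X, ρ_X)` determined by `Θ (X, γ)`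
      (∀ (X : C) (γ : M.obj X ⟶ X),
        (η.app X ≫ γ = 𝟙 X) → (μ.app X ≫ γ = M.map γ ≫ γ) →
        ρ.app X ≫ γ = S.map γ ≫ (S.map (η.app X) ≫ ρ.app X ≫ γ))) := by

  have key5 : ∀ (X : C) (γ : M.obj X ⟶ X),
      (η.app X ≫ γ = 𝟙 X) → (μ.app X ≫ γ = M.map γ ≫ γ) →
      ρ.app X ≫ γ = S.map γ ≫ (S.map (η.app X) ≫ ρ.app X ≫ γ) := by
    intro X γ hunit hmul
    have hηnat : γ ≫ η.app X = η.app (M.obj X) ≫ M.map γ := by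
      simpa using (η.naturality γ)
    have hρnat : S.map (M.map γ) ≫ ρ.app X = ρ.app (M.obj X) ≫ M.map γ := by
      simpa using (ρ.naturality γ)
    calc ρ.app X ≫ γ
        = S.map (𝟙 (M.obj X)) ≫ ρ.app X ≫ γ := by simp
      _ = S.map (η.app (M.obj X) ≫ μ.app X) ≫ ρ.app X ≫ γ := by rw [(hμ X).2]
      _ = S.map (η.app (M.obj X)) ≫ S.map (μ.app X) ≫ ρ.app X ≫ γ := by
          rw [S.map_comp, Category.assoc]
      _ = S.map (η.app (M.obj X)) ≫ ρ.app (M.obj X) ≫ μ.app X ≫ γ := by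
          rw [← Category.assoc (S.map (μ.app X)), ← (hμ X).1, Category.assoc]
      _ = S.map (η.app (M.obj X)) ≫ ρ.app (M.obj X) ≫ M.map γ ≫ γ := by rw [hmul]
      _ = S.map (η.app (M.obj X)) ≫ S.map (M.map γ) ≫ ρ.app X ≫ γ := by
          rw [← Category.assoc (S.map (M.map γ)), hρnat, Category.assoc]
      _ = S.map γ ≫ S.map (η.app X) ≫ ρ.app X ≫ γ := by
          rw [← Category.assoc, ← Category.assoc, ← S.map_comp, ← hηnat, S.map_comp]
          simp
  refine ⟨?_, ?_, ?_⟩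
  · -- (1)
    intro A hA γ hhom hunit
    obtain ⟨g, -, hu⟩ := huniv A (M.obj A.a) γ
    have h1 : μ.app A.a ≫ γ = g := by
      apply hu
      constructor
      · rw [← Category.assoc, (hμ A.a).1, Category.assoc, hhom, S.map_comp,
          Category.assoc]
      · rw [← Category.assoc, (hμ A.a).2]; simp
    have h2 : M.map γ ≫ γ = g := by
      apply hu
      constructor
      · have hρnat : S.map (M.map γ) ≫ ρ.app A.a = ρ.app (M.obj A.a) ≫ M.map γ := by
          simpa using (ρ.naturality γ)
        rw [← Category.assoc, ← hρnat, Category.assoc, hhom, S.map_comp,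
          Category.assoc]
      · have hηnat : γ ≫ η.app A.a = η.app (M.obj A.a) ≫ M.map γ := by
          simpa using (η.naturality γ)
        rw [← Category.assoc, ← hηnat, Category.assoc, hunit, Category.comp_id]
    rw [h1, h2]
  · -- (2)
    intro A B hA hB γA γB hhomA hunitA hhomB hunitB h
    obtain ⟨g, -, hu⟩ := huniv B A.a h.f
    have h1 : M.map h.f ≫ γB = g := by
      apply hu
      constructor
      · have hρnat : S.map (M.map h.f) ≫ ρ.app B.a = ρ.app A.a ≫ M.map h.f := by
          simpa using (ρ.naturality h.f)
        rw [← Category.assoc, ← hρnat, Category.assoc, hhomB, S.map_comp,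
          Category.assoc]
      · have hηnat : h.f ≫ η.app B.a = η.app A.a ≫ M.map h.f := by
          simpa using (η.naturality h.f)
        rw [← Category.assoc, ← hηnat, Category.assoc, hunitB, Category.comp_id]
    have h2 : γA ≫ h.f = g := by
      apply hu
      constructor
      · rw [← Category.assoc, hhomA, Category.assoc, ← h.h, S.map_comp,
          Category.assoc]
      · rw [← Category.assoc, hunitA]; simp
    rw [h1, h2]
  · intro hsplit
    refine ⟨?_, ?_, key5⟩
    · -- (3)
      intro X γ hunit hmul
      have h5 := key5 X γ hunit hmul
      exact hsplit ⟨M.obj X, ρ.app X⟩ ⟨X, S.map (η.app X) ≫ ρ.app X ≫ γ⟩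
        (hfree X) ⟨γ, h5.symm⟩ (η.app X) hunit
    · -- (4)
      intro A hA γ hhom hunit
      rw [hhom, ← Category.assoc, ← S.map_comp, hunit]; simp
end
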